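/- arXiv:0807.3461 — 2 statements merged into one kernel-verified Lean document; each statement's English description precedes it below -/
import Mathlib

section
/- If P₁ and P₂ are two distinct essential subsets of an additive basis A, then d(P₁) ≥ 2, d(P₂) ≥ 2, and gcd(d(P₁), d(P₂)) = 1. -/
open scoped BigOperators

/-- `A` represents every sufficiently large integer as a sum of `h` of its elements
(repetitions allowed). -/
def RepresentsWith (A : Set ℤ) (h : ℕ) : Prop :=
  ∃ N : ℤ, ∀ n : ℤ, N ≤ n → ∃ f : Fin h → ℤ, (∀ i, f i ∈ A) ∧ (∑ i, f i) = n

/-- `A ⊆ ℤ` is an additive basis: it has finite intersection with the negative integers and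
there is an `h` such that every sufficiently large integer is a sum of `h` elements of `A`. -/
def IsAdditiveBasis (A : Set ℤ) : Prop :=
  (A ∩ {x : ℤ | x < 0}).Finite ∧ ∃ h : ℕ, RepresentsWith A h

/-- `P` is an essentiality of `A`: `P ⊆ A`, `A \ P` is not a basis, and `P` is minimal
for inclusion with this property. -/
def IsEssentiality (A P : Set ℤ) : Prop :=
  P ⊆ A ∧ ¬ IsAdditiveBasis (A \ P) ∧ ∀ Q : Set ℤ, Q ⊂ P → IsAdditiveBasis (A \ Q)

/-- `P` is an essential subset of `A`: a finite essentiality. -/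
def IsEssentialSubset (A P : Set ℤ) : Prop :=
  IsEssentiality A P ∧ P.Finite

/-- The gcd of a set of integers, as a natural number (the nonnegative generator of the
ideal generated by the set). -/
noncomputable def setGcd (S : Set ℤ) : ℕ :=
  (Submodule.IsPrincipal.generator (Ideal.span S)).natAbs

/-- `d(P) := gcd {x - y : x, y ∈ A \ P}`. -/
noncomputable def dP (A P : Set ℤ) : ℕ :=
  setGcd {z : ℤ | ∃ x ∈ A \ P, ∃ y ∈ A \ P, z = x - y}

/-!
If `A \ P` has difference gcd `1`, Bézout gives two sums of `t` elements of `A \ P` differing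
by `1`, hence sums of `r * t` elements filling a whole interval of length `r`. Replacing the
finitely many elements of `P` in a representation by a fixed element of `A \ P` moves the sum by
a bounded amount, which such an interval absorbs; so `A \ P` would again be a basis. Hence
`d(P) ≠ 1`, and `d(P) ≠ 0` because `A \ P` is infinite.

For two distinct essential subsets neither contains the other, so `A \ (P₁ ∩ P₂)` is a basis.
Each of its elements lies outside `P₁` or outside `P₂`, hence is congruent to a fixed
`w ∈ A \ (P₁ ∪ P₂)` modulo `gcd(d(P₁), d(P₂))`; a basis cannot lie in one residue class
modulo an integer other than `±1`.
-/

open scoped Pointwise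

theorem Set.Finite.nsmul {M : Type*} [AddMonoid M] {s : Set M} (hs : s.Finite) :
    ∀ n : ℕ, (n • s).Finite
  | 0 => by simp
  | n + 1 => by rw [succ_nsmul]; exact (hs.nsmul n).add hs

theorem representsWith_iff {A : Set ℤ} {h : ℕ} :
    RepresentsWith A h ↔ ∃ N : ℤ, ∀ n : ℤ, N ≤ n → n ∈ h • A := by
  simp only [RepresentsWith, Set.mem_nsmul_iff_sum]

theorem IsAdditiveBasis.infinite {A : Set ℤ} (hA : IsAdditiveBasis A) : A.Infinite := by
  obtain ⟨-, h, hrep⟩ := hA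
  obtain ⟨N, hN⟩ := representsWith_iff.mp hrep
  exact fun hfin => Set.Ici_infinite N ((hfin.nsmul h).subset hN)

theorem RepresentsWith.isUnit_of_forall_dvd_sub {B : Set ℤ} {h : ℕ} (hB : RepresentsWith B h)
    {g w : ℤ} (hw : ∀ x ∈ B, g ∣ x - w) : IsUnit g := by
  obtain ⟨N, hN⟩ := hB
  have hres : ∀ n, N ≤ n → g ∣ n - h * w := by
    intro n hn
    obtain ⟨f, hf, rfl⟩ := hN n hn
    have hsum : ∑ i, f i - h * w = ∑ i, (f i - w) := by simp [Finset.sum_sub_distrib]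
    exact hsum ▸ Finset.dvd_sum fun i _ => hw (f i) (hf i)
  have hone := dvd_sub (hres (N + 1) (by omega)) (hres N le_rfl)
  exact isUnit_of_dvd_one (by simpa using hone)

theorem setGcd_dvd {S : Set ℤ} {z : ℤ} (hz : z ∈ S) : (setGcd S : ℤ) ∣ z := by
  have hmem : z ∈ Ideal.span S := Ideal.subset_span hz
  rw [← Submodule.IsPrincipal.span_singleton_generator (Ideal.span S)] at hmem
  exact Int.natAbs_dvd.mpr (Ideal.mem_span_singleton.mp hmem)

theorem span_eq_top_of_setGcd_eq_one {S : Set ℤ} (h : setGcd S = 1) : Ideal.span S = ⊤ := by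
  rw [← Submodule.IsPrincipal.span_singleton_generator (Ideal.span S)]
  exact Ideal.span_singleton_eq_top.mpr (Int.isUnit_iff_natAbs_eq.mpr h)

theorem dP_dvd_sub {A P : Set ℤ} {x y : ℤ} (hx : x ∈ A \ P) (hy : y ∈ A \ P) :
    (dP A P : ℤ) ∣ x - y :=
  setGcd_dvd ⟨x, hx, y, hy, rfl⟩

def sumsetDifferences {G : Type*} [AddCommGroup G] (B : Set G) : AddSubgroup G where
  carrier := {z | ∃ t : ℕ, ∃ s₁ ∈ t • B, ∃ s₂ ∈ t • B, s₁ - s₂ = z}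
  zero_mem' := ⟨0, 0, Set.zero_mem_zero, 0, Set.zero_mem_zero, sub_zero 0⟩
  add_mem' := by
    rintro _ _ ⟨t, s₁, hs₁, s₂, hs₂, rfl⟩ ⟨t', s₁', hs₁', s₂', hs₂', rfl⟩
    refine ⟨t + t', s₁ + s₁', ?_, s₂ + s₂', ?_, by abel⟩ <;>
      rw [add_nsmul] <;> exact Set.add_mem_add ‹_› ‹_›
  neg_mem' := by
    rintro _ ⟨t, s₁, hs₁, s₂, hs₂, rfl⟩
    exact ⟨t, s₂, hs₂, s₁, hs₁, (neg_sub s₁ s₂).symm⟩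

theorem exists_mem_nsmul_add_one_mem_nsmul {B : Set ℤ}
    (hB : setGcd {z : ℤ | ∃ x ∈ B, ∃ y ∈ B, z = x - y} = 1) :
    ∃ t : ℕ, ∃ s ∈ t • B, s + 1 ∈ t • B := by
  have hle : Ideal.span {z : ℤ | ∃ x ∈ B, ∃ y ∈ B, z = x - y} ≤
      (sumsetDifferences B).toIntSubmodule := by
    rw [Ideal.span_le]
    rintro _ ⟨x, hx, y, hy, rfl⟩
    exact ⟨1, x, by rwa [one_nsmul], y, by rwa [one_nsmul], rfl⟩
  rw [span_eq_top_of_setGcd_eq_one hB, top_le_iff] at hle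
  obtain ⟨t, s₁, hs₁, s₂, hs₂, h⟩ : (1 : ℤ) ∈ (sumsetDifferences B).toIntSubmodule :=
    hle ▸ Submodule.mem_top
  exact ⟨t, s₂, hs₂, by rwa [← h, add_sub_cancel]⟩

theorem add_mem_nsmul_of_consecutive {B : Set ℤ} {t : ℕ} {s : ℤ} (hs : s ∈ t • B)
    (hs' : s + 1 ∈ t • B) {r u : ℕ} (hu : u ≤ r) : r * s + u ∈ (r * t) • B := by
  have hmem := Set.add_mem_add (Set.nsmul_mem_nsmul (n := u) hs')
    (Set.nsmul_mem_nsmul (n := r - u) hs)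
  rw [← mul_nsmul', ← mul_nsmul', ← add_nsmul, ← Nat.add_mul, Nat.add_sub_cancel' hu] at hmem
  convert hmem using 1
  simp only [nsmul_eq_mul, Nat.cast_sub hu]
  ring

theorem exists_finite_subset_diff_add {A P : Set ℤ} (hP : P.Finite) {b : ℤ} (hb : b ∈ A \ P) :
    ∃ E : Set ℤ, E.Finite ∧ A ⊆ A \ P + E := by
  refine ⟨insert 0 ((· - b) '' P), (hP.image _).insert 0, fun x hx => ?_⟩
  by_cases hxP : x ∈ P
  · exact ⟨b, hb, x - b, Set.mem_insert_of_mem _ ⟨x, hxP, rfl⟩, add_sub_cancel b x⟩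
  · exact ⟨x, ⟨hx, hxP⟩, 0, Set.mem_insert _ _, add_zero x⟩

theorem exists_representsWith_of_subset_add_finite {A B E : Set ℤ} {h : ℕ}
    (hA : RepresentsWith A h) (hE : E.Finite) (hAB : A ⊆ B + E) {t : ℕ} {s : ℤ}
    (hs : s ∈ t • B) (hs' : s + 1 ∈ t • B) : ∃ h' : ℕ, RepresentsWith B h' := by
  obtain ⟨N, hN⟩ := representsWith_iff.mp hA
  obtain ⟨L, hL⟩ := (hE.nsmul h).bddBelow
  obtain ⟨U, hU⟩ := (hE.nsmul h).bddAbove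
  set r := (U - L).toNat
  refine ⟨h + r * t, representsWith_iff.mpr ⟨N + r * s - L, fun n hn => ?_⟩⟩
  have hsplit : n - r * s + L ∈ h • B + h • E := by
    rw [← nsmul_add]
    exact Set.nsmul_subset_nsmul_left hAB (hN _ (by linarith))
  obtain ⟨b, hb, e, he, hbe⟩ := hsplit
  have hu : (e - L).toNat ≤ r := Int.toNat_le_toNat (by linarith [hU he])
  have hLe : ((e - L).toNat : ℤ) = e - L := Int.toNat_of_nonneg (by linarith [hL he])
  rw [add_nsmul]
  refine ⟨b, hb, _, add_mem_nsmul_of_consecutive hs hs' hu, ?_⟩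
  rw [hLe]
  linear_combination hbe

theorem IsAdditiveBasis.diff_of_dP_eq_one {A P : Set ℤ} (hA : IsAdditiveBasis A)
    (hP : P.Finite) (hd : dP A P = 1) : IsAdditiveBasis (A \ P) := by
  obtain ⟨b, hb⟩ := (hA.infinite.sdiff hP).nonempty
  obtain ⟨E, hE, hAE⟩ := exists_finite_subset_diff_add hP hb
  obtain ⟨t, s, hs, hs'⟩ := exists_mem_nsmul_add_one_mem_nsmul hd
  obtain ⟨hneg, h, hrep⟩ := hA
  exact ⟨hneg.subset (Set.inter_subset_inter_left _ Set.sdiff_subset),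
    exists_representsWith_of_subset_add_finite hrep hE hAE hs hs'⟩

theorem two_le_dP {A P : Set ℤ} (hA : IsAdditiveBasis A) (hP : IsEssentialSubset A P) :
    2 ≤ dP A P := by
  obtain ⟨⟨-, hnb, -⟩, hfin⟩ := hP
  obtain ⟨x, hx, y, hy, hxy⟩ := (hA.infinite.sdiff hfin).nontrivial
  have h0 : dP A P ≠ 0 := fun h0 =>
    hxy (sub_eq_zero.mp (zero_dvd_iff.mp (by simpa [h0] using dP_dvd_sub hx hy)))
  have h1 : dP A P ≠ 1 := fun h1 => hnb (hA.diff_of_dP_eq_one hfin h1)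
  omega

theorem IsEssentiality.not_ssubset {A P₁ P₂ : Set ℤ} (h₁ : IsEssentiality A P₁)
    (h₂ : IsEssentiality A P₂) : ¬ P₁ ⊂ P₂ :=
  fun hlt => h₁.2.1 (h₂.2.2 P₁ hlt)

theorem gcd_dP_eq_one {A P₁ P₂ : Set ℤ} (h₁ : IsEssentialSubset A P₁)
    (h₂ : IsEssentialSubset A P₂) (hne : P₁ ≠ P₂) : Nat.gcd (dP A P₁) (dP A P₂) = 1 := by
  have hlt : P₁ ∩ P₂ ⊂ P₁ := Set.inter_subset_left.ssubset_of_ne fun heq =>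
    h₁.1.not_ssubset h₂.1 ((heq ▸ Set.inter_subset_right).ssubset_of_ne hne)
  have hQ : IsAdditiveBasis (A \ (P₁ ∩ P₂)) := h₁.1.2.2 _ hlt
  obtain ⟨w, hwA, hw⟩ := (hQ.infinite.sdiff (h₁.2.union h₂.2)).nonempty
  have hw₁ : w ∈ A \ P₁ := ⟨hwA.1, fun h => hw (Or.inl h)⟩
  have hw₂ : w ∈ A \ P₂ := ⟨hwA.1, fun h => hw (Or.inr h)⟩
  have hcong : ∀ x ∈ A \ (P₁ ∩ P₂), (Nat.gcd (dP A P₁) (dP A P₂) : ℤ) ∣ x - w := by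
    rintro x ⟨hxA, hx⟩
    by_cases hx₁ : x ∈ P₁
    · exact (Int.natCast_dvd_natCast.mpr (Nat.gcd_dvd_right _ _)).trans
        (dP_dvd_sub ⟨hxA, fun hx₂ => hx ⟨hx₁, hx₂⟩⟩ hw₂)
    · exact (Int.natCast_dvd_natCast.mpr (Nat.gcd_dvd_left _ _)).trans
        (dP_dvd_sub ⟨hxA, hx₁⟩ hw₁)
  obtain ⟨-, h, hrep⟩ := hQ
  exact Nat.isUnit_iff.mp (Int.ofNat_isUnit.mp (hrep.isUnit_of_forall_dvd_sub hcong))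

theorem dP_ge_two_and_coprime_of_essentialSubsets (A P₁ P₂ : Set ℤ)
    (hA : IsAdditiveBasis A)
    (h₁ : IsEssentialSubset A P₁) (h₂ : IsEssentialSubset A P₂) (hne : P₁ ≠ P₂) :
    2 ≤ dP A P₁ ∧ 2 ≤ dP A P₂ ∧ Nat.gcd (dP A P₁) (dP A P₂) = 1 :=
  ⟨two_le_dP hA h₁, two_le_dP hA h₂, gcd_dP_eq_one h₁ h₂ hne⟩
end

section
/- Let A be an additive basis and let (Pᵢ)_{i ∈ I} be a nonempty family of pairwise distinct essential subsets of A. Then for every pair (x, y) ∈ A² with x ≠ y, the set J_{x,y} := {i ∈ I : x ∉ Pᵢ and y ∉ Pᵢ} is finite. -/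
open scoped BigOperators

/-!
Write `H(B)` for the subgroup of `ℤ` generated by `B - B`. A basis `B` has `H(B) = ℤ`, since two
consecutive integers are sums of `h` elements of `B`. Conversely, if `F` is finite, `A` a basis and
`H(A \ F) = ℤ`, then `A \ F` is again a basis: `1` is a difference of two sums of `m` elements
of `A \ F`, say `v + 1` and `v`, and then `t v + e` is a sum of `t m` of them for every `0 ≤ e ≤ t`.
These absorb the bounded error made when every element of `F` in a representation by `A` is
replaced by a fixed `b₀ ∈ A \ F`.

Hence for each essential subset `P` of `A`, `H(A \ P)` is a proper subgroup containing `x - y ≠ 0`,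
and there are finitely many such subgroups. Two essential subsets `P, Q` avoiding `x` with
`H(A \ P) = H(A \ Q)` coincide: `A \ (P ∩ Q)` lies in `x + H(A \ P)`, so it is not a basis, and
minimality of `P` forces `P ∩ Q = P`.
-/

open Pointwise

section Sumsets

variable {α : Type*}

theorem Set.mem_nsmul_iff_exists_fin_sum [AddCommMonoid α] {B : Set α} {h : ℕ} {n : α} :
    n ∈ h • B ↔ ∃ f : Fin h → α, (∀ i, f i ∈ B) ∧ ∑ i, f i = n := by
  rw [Set.mem_nsmul]
  constructor
  · rintro ⟨f, rfl⟩
    exact ⟨fun i => f i, fun i => (f i).2, by simp [List.sum_ofFn]⟩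
  · rintro ⟨f, hf, rfl⟩
    exact ⟨fun i => ⟨f i, hf i⟩, by simp [List.sum_ofFn]⟩

theorem exists_mem_nsmul_abs_sub_le [AddCommGroup α] [LinearOrder α] [IsOrderedAddMonoid α]
    {A B : Set α} {M : α} (hAB : ∀ a ∈ A, ∃ b ∈ B, |a - b| ≤ M) :
    ∀ (h : ℕ), ∀ n ∈ h • A, ∃ n' ∈ h • B, |n - n'| ≤ h • M
  | 0, n, hn => ⟨0, by simp, by simp_all⟩
  | h + 1, n, hn => by
    rw [succ_nsmul] at hn ⊢
    obtain ⟨p, hp, a, ha, rfl⟩ := hn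
    obtain ⟨p', hp', hpp'⟩ := exists_mem_nsmul_abs_sub_le hAB h p hp
    obtain ⟨b, hb, hab⟩ := hAB a ha
    refine ⟨p' + b, Set.add_mem_add hp' hb, ?_⟩
    calc |p + a - (p' + b)| = |(p - p') + (a - b)| := by rw [add_sub_add_comm]
      _ ≤ |p - p'| + |a - b| := abs_add_le _ _
      _ ≤ h • M + M := add_le_add hpp' hab
      _ = (h + 1) • M := (succ_nsmul M h).symm

end Sumsets

theorem RepresentsWith.iff_mem_nsmul {B : Set ℤ} {h : ℕ} :
    RepresentsWith B h ↔ ∃ N : ℤ, ∀ n : ℤ, N ≤ n → n ∈ h • B := by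
  simp only [RepresentsWith, Set.mem_nsmul_iff_exists_fin_sum]

theorem add_natCast_mem_nsmul {S : Set ℤ} {v : ℤ} (hv : v ∈ S) (hv₁ : v + 1 ∈ S) {e t : ℕ}
    (het : e ≤ t) : t * v + e ∈ t • S := by
  have hmem :=
    Set.add_mem_add (Set.nsmul_mem_nsmul (n := e) hv₁) (Set.nsmul_mem_nsmul (n := t - e) hv)
  rw [← add_nsmul, Nat.add_sub_cancel' het] at hmem
  convert hmem using 1
  simp only [nsmul_eq_mul]
  push_cast [het]
  ring

section DiffSubgroup

variable {G : Type*} [AddCommGroup G]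

def diffSubgroup (B : Set G) : AddSubgroup G :=
  AddSubgroup.closure (B - B)

theorem sub_mem_diffSubgroup {B : Set G} {a b : G} (ha : a ∈ B) (hb : b ∈ B) :
    a - b ∈ diffSubgroup B :=
  AddSubgroup.subset_closure (Set.sub_mem_sub ha hb)

theorem diffSubgroup_le_of_forall_sub_mem {B : Set G} {H : AddSubgroup G} {x : G}
    (hB : ∀ z ∈ B, z - x ∈ H) : diffSubgroup B ≤ H := by
  refine (AddSubgroup.closure_le _).2 ?_
  rintro _ ⟨a, ha, b, hb, rfl⟩
  simpa using sub_mem (hB a ha) (hB b hb)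

theorem exists_mem_nsmul_sub_eq_of_mem_diffSubgroup {B : Set G} {z : G}
    (hz : z ∈ diffSubgroup B) : ∃ m : ℕ, ∃ u ∈ m • B, ∃ v ∈ m • B, u - v = z := by
  let S : AddSubgroup G :=
    { carrier := {z | ∃ m : ℕ, ∃ u ∈ m • B, ∃ v ∈ m • B, u - v = z}
      add_mem' := by
        rintro _ _ ⟨m, u, hu, v, hv, rfl⟩ ⟨m', u', hu', v', hv', rfl⟩
        refine ⟨m + m', u + u', ?_, v + v', ?_, add_sub_add_comm u u' v v'⟩ <;> rw [add_nsmul]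
        exacts [Set.add_mem_add hu hu', Set.add_mem_add hv hv']
      zero_mem' := ⟨0, 0, by simp, 0, by simp, sub_self 0⟩
      neg_mem' := by
        rintro _ ⟨m, u, hu, v, hv, rfl⟩
        exact ⟨m, v, hv, u, hu, (neg_sub u v).symm⟩ }
  have hle : diffSubgroup B ≤ S := by
    refine (AddSubgroup.closure_le _).2 ?_
    rintro _ ⟨a, ha, b, hb, rfl⟩
    exact ⟨1, a, by simpa using ha, b, by simpa using hb, rfl⟩
  exact hle hz

end DiffSubgroup

theorem RepresentsWith.diffSubgroup_eq_top {B : Set ℤ} {h : ℕ} (hB : RepresentsWith B h) :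
    diffSubgroup B = ⊤ := by
  obtain ⟨N, hN⟩ := hB
  obtain ⟨f, hf, hfN⟩ := hN (N + 1) (by omega)
  obtain ⟨g, hg, hgN⟩ := hN N le_rfl
  have hone : ∑ i, (f i - g i) = 1 := by rw [Finset.sum_sub_distrib, hfN, hgN]; ring
  have hone_mem : (1 : ℤ) ∈ diffSubgroup B :=
    hone ▸ sum_mem fun i _ => sub_mem_diffSubgroup (hf i) (hg i)
  exact eq_top_iff.2 fun n _ => by simpa using zsmul_mem hone_mem n

theorem IsAdditiveBasis.diffSubgroup_eq_top {B : Set ℤ} (hB : IsAdditiveBasis B) :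
    diffSubgroup B = ⊤ :=
  let ⟨_, _, hrep⟩ := hB
  hrep.diffSubgroup_eq_top

theorem IsAdditiveBasis.sdiff_of_finite {A F : Set ℤ} (hA : IsAdditiveBasis A) (hF : F.Finite)
    (hAF : diffSubgroup (A \ F) = ⊤) : IsAdditiveBasis (A \ F) := by
  obtain ⟨hneg, k, hk⟩ := hA
  obtain ⟨N, hN⟩ := RepresentsWith.iff_mem_nsmul.1 hk
  obtain ⟨m, u, hu, v, hv, huv⟩ :=
    exists_mem_nsmul_sub_eq_of_mem_diffSubgroup (hAF ▸ AddSubgroup.mem_top (1 : ℤ))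
  rw [show u = v + 1 by omega] at hu
  obtain ⟨b₀, hb₀⟩ : (A \ F).Nonempty :=
    Set.nonempty_iff_ne_empty.2 fun h => by simp [diffSubgroup, h] at hAF
  obtain ⟨M, hM⟩ := (hF.image fun a => (a - b₀).natAbs).bddAbove
  have happrox : ∀ a ∈ A, ∃ b ∈ A \ F, |a - b| ≤ (M : ℤ) := by
    intro a ha
    by_cases haF : a ∈ F
    · exact ⟨b₀, hb₀, by rw [Int.abs_eq_natAbs]; exact_mod_cast hM ⟨a, haF, rfl⟩⟩
    · exact ⟨a, ⟨ha, haF⟩, by simp⟩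
  set t := 2 * k * M
  refine ⟨hneg.subset fun z hz => ⟨hz.1.1, hz.2⟩, k + m * t,
    RepresentsWith.iff_mem_nsmul.2 ⟨N + t * v + k * M, fun n hn => ?_⟩⟩
  obtain ⟨n', hn', hnn'⟩ :=
    exists_mem_nsmul_abs_sub_le happrox k _ (hN (n - t * v - k * M) (by omega))
  rw [nsmul_eq_mul, abs_le] at hnn'
  obtain ⟨e, he⟩ : ∃ e : ℕ, (e : ℤ) = n - t * v - n' := ⟨(n - t * v - n').toNat, by omega⟩
  have het : e ≤ t := by
    have ht : (t : ℤ) = 2 * (k * M) := by push_cast [t]; ring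
    omega
  have hmem := Set.add_mem_add hn' (add_natCast_mem_nsmul hv hu het)
  rw [he, ← mul_nsmul, ← add_nsmul] at hmem
  convert hmem using 1
  ring

theorem Int.finite_setOf_mem_addSubgroup {c : ℤ} (hc : c ≠ 0) :
    {H : AddSubgroup ℤ | c ∈ H}.Finite := by
  refine ((Set.finite_Icc (-|c|) |c|).image AddSubgroup.zmultiples).subset ?_
  intro H hH
  obtain ⟨a, rfl⟩ := Int.subgroup_cyclic H
  rw [← AddSubgroup.zmultiples_eq_closure] at hH ⊢
  have hac : |a| ≤ |c| :=
    Int.le_of_dvd (abs_pos.2 hc) ((abs_dvd_abs _ _).2 (Int.mem_zmultiples_iff.1 hH))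
  exact ⟨a, abs_le.1 hac, rfl⟩

theorem IsEssentiality.subset_of_diffSubgroup_eq {A P Q : Set ℤ} (hP : IsEssentiality A P)
    {x : ℤ} (hxP : x ∈ A \ P) (hxQ : x ∈ A \ Q)
    (hPQ : diffSubgroup (A \ P) = diffSubgroup (A \ Q)) (hne : diffSubgroup (A \ P) ≠ ⊤) :
    P ⊆ Q := by
  by_contra hPQ'
  have hbasis := hP.2.2 (P ∩ Q) ⟨Set.inter_subset_left, fun h => hPQ' fun z hz => (h hz).2⟩
  have hle : diffSubgroup (A \ (P ∩ Q)) ≤ diffSubgroup (A \ P) := by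
    refine diffSubgroup_le_of_forall_sub_mem (x := x) fun z hz => ?_
    rcases Set.sdiff_inter ▸ hz with hz | hz
    · exact sub_mem_diffSubgroup hz hxP
    · exact hPQ ▸ sub_mem_diffSubgroup hz hxQ
  exact hne (top_le_iff.1 (hbasis.diffSubgroup_eq_top ▸ hle))

theorem Jxy_finite_general {I : Type*} (A : Set ℤ) (P : I → Set ℤ) (hA : IsAdditiveBasis A)
    (hP : ∀ i, IsEssentialSubset A (P i))
    (hdist : ∀ i j : I, i ≠ j → P i ≠ P j) :
    ∀ x ∈ A, ∀ y ∈ A, x ≠ y → {i : I | x ∉ P i ∧ y ∉ P i}.Finite := by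
  intro x hx y hy hxy
  have hne_top : ∀ i, diffSubgroup (A \ P i) ≠ ⊤ := fun i h =>
    (hP i).1.2.1 (hA.sdiff_of_finite (hP i).2 h)
  have hmaps : Set.MapsTo (fun i => diffSubgroup (A \ P i)) {i | x ∉ P i ∧ y ∉ P i}
      {H | x - y ∈ H} := fun i hi => sub_mem_diffSubgroup ⟨hx, hi.1⟩ ⟨hy, hi.2⟩
  refine Set.Finite.of_injOn hmaps ?_ (Int.finite_setOf_mem_addSubgroup (sub_ne_zero.2 hxy))
  intro i hi j hj hij
  by_contra hne
  exact hdist i j hne <| subset_antisymm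
    ((hP i).1.subset_of_diffSubgroup_eq ⟨hx, hi.1⟩ ⟨hx, hj.1⟩ hij (hne_top i))
    ((hP j).1.subset_of_diffSubgroup_eq ⟨hx, hj.1⟩ ⟨hx, hi.1⟩ hij.symm (hne_top j))

theorem Jxy_finite {I : Type*} (A : Set ℤ) (P : I → Set ℤ) (hA : IsAdditiveBasis A)
    (hI : Nonempty I) (hP : ∀ i, IsEssentialSubset A (P i))
    (hdist : ∀ i j : I, i ≠ j → P i ≠ P j) :
    ∀ x ∈ A, ∀ y ∈ A, x ≠ y → {i : I | x ∉ P i ∧ y ∉ P i}.Finite :=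
  Jxy_finite_general A P hA hP hdist
end
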